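/- arXiv:2506.06894 — 5 statements merged into one kernel-verified Lean document; each statement's English description precedes it below -/
import Mathlib

section
/- For every integer ℓ ≥ 1, every integer m, and every real t > 0, the quantity Z_m^{[ℓ]}(t) satisfies the strict log-convexity inequality Z_m^{[ℓ]}(t)^2 < Z_{m-1}^{[ℓ]}(t) · Z_{m+1}^{[ℓ]}(t). -/
/-- `Z ℓ m t = ∑_{δ₁,…,δ_ℓ ≥ 1} δ₁^{m-1} δ₂^{m-2} ⋯ δ_ℓ^{m-ℓ} e^{-δ₁⋯δ_ℓ t}`. -/
noncomputable def Z (ℓ : ℕ) (m : ℤ) (t : ℝ) : ℝ :=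
  ∑' δ : Fin ℓ → ℕ+,
    (∏ j, ((δ j : ℕ) : ℝ) ^ (m - 1 - (j : ℤ))) *
      Real.exp (-(∏ j, ((δ j : ℕ) : ℝ)) * t)

namespace ZAux

/-- The weight `c δ k = ∏ δ_j^{k-1-j}`. -/
noncomputable def c (ℓ : ℕ) (δ : Fin ℓ → ℕ+) (k : ℤ) : ℝ :=
  ∏ j, ((δ j : ℕ) : ℝ) ^ (k - 1 - (j : ℤ))

/-- The product `P δ = ∏ δ_j`. -/
noncomputable def P (ℓ : ℕ) (δ : Fin ℓ → ℕ+) : ℝ := ∏ j, ((δ j : ℕ) : ℝ)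

lemma delta_pos {ℓ : ℕ} (δ : Fin ℓ → ℕ+) (j : Fin ℓ) : (0 : ℝ) < ((δ j : ℕ) : ℝ) := by
  exact_mod_cast (δ j).pos

lemma one_le_delta {ℓ : ℕ} (δ : Fin ℓ → ℕ+) (j : Fin ℓ) : (1 : ℝ) ≤ ((δ j : ℕ) : ℝ) := by
  exact_mod_cast (δ j).one_le

lemma c_pos {ℓ : ℕ} (δ : Fin ℓ → ℕ+) (k : ℤ) : 0 < c ℓ δ k :=
  Finset.prod_pos fun j _ => zpow_pos (delta_pos δ j) _

lemma P_pos {ℓ : ℕ} (δ : Fin ℓ → ℕ+) : 0 < P ℓ δ :=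
  Finset.prod_pos fun j _ => delta_pos δ j

lemma c_succ {ℓ : ℕ} (δ : Fin ℓ → ℕ+) (k : ℤ) : c ℓ δ (k + 1) = c ℓ δ k * P ℓ δ := by
  unfold c P
  rw [← Finset.prod_mul_distrib]
  refine Finset.prod_congr rfl fun j _ => ?_
  have hne : ((δ j : ℕ) : ℝ) ≠ 0 := (delta_pos δ j).ne'
  have : k + 1 - 1 - (j : ℤ) = (k - 1 - (j : ℤ)) + 1 := by ring
  rw [this, zpow_add_one₀ hne]

lemma Z_eq (ℓ : ℕ) (m : ℤ) (t : ℝ) :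
    Z ℓ m t = ∑' δ : Fin ℓ → ℕ+, c ℓ δ m * Real.exp (-(P ℓ δ) * t) := rfl

/-- Summability of product-form functions on `Fin n → ℕ+`. -/
lemma summable_pi_prod {g : ℕ+ → ℝ} (hg : Summable g) (hg0 : ∀ n, 0 ≤ g n) (n : ℕ) :
    Summable (fun δ : Fin n → ℕ+ => ∏ j, g (δ j)) := by
  induction n with
  | zero => exact Summable.of_finite
  | succ n ih =>
      have h : Summable (fun p : ℕ+ × (Fin n → ℕ+) => g p.1 * ∏ j, g (p.2 j)) :=
        Summable.mul_of_nonneg (f := g) (g := fun δ : Fin n → ℕ+ => ∏ j, g (δ j))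
          hg ih (fun k => hg0 k) (fun δ => Finset.prod_nonneg fun j _ => hg0 _)
      rw [← (Fin.consEquiv fun _ : Fin (n + 1) => ℕ+).summable_iff]
      refine h.congr fun p => ?_
      simp [Fin.consEquiv, Fin.prod_univ_succ]

/-- Summability of the `Z` summand. -/
lemma summable_Z (ℓ : ℕ) (hℓ : 1 ≤ ℓ) (m : ℤ) {t : ℝ} (ht : 0 < t) :
    Summable (fun δ : Fin ℓ → ℕ+ => c ℓ δ m * Real.exp (-(P ℓ δ) * t)) := by
  set K : ℕ := (m - 1).toNat with hK
  set s : ℝ := t / ℓ with hs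
  have hℓ' : (0 : ℝ) < ℓ := by exact_mod_cast hℓ
  have hs0 : 0 < s := div_pos ht hℓ'
  set g : ℕ+ → ℝ := fun n => ((n : ℕ) : ℝ) ^ K * Real.exp (-((n : ℕ) : ℝ) * s) with hgdef
  have hg0 : ∀ n, 0 ≤ g n := fun n =>
    mul_nonneg (pow_nonneg (by positivity) _) (Real.exp_pos _).le
  have hgnat : Summable (fun n : ℕ => (n : ℝ) ^ K * Real.exp (-s) ^ n) :=
    summable_pow_mul_geometric_of_norm_lt_one K
      (by rw [Real.norm_eq_abs, abs_of_pos (Real.exp_pos _)]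
          exact Real.exp_lt_one_iff.2 (by linarith))
  have hg : Summable g := by
    have := hgnat.comp_injective (fun a b h => PNat.coe_injective h :
      Function.Injective (fun n : ℕ+ => (n : ℕ)))
    refine this.congr fun n => ?_
    simp only [hgdef, Function.comp]
    congr 1
    rw [← Real.exp_nat_mul]
    congr 1
    ring
  have hpi := summable_pi_prod hg hg0 ℓ
  refine Summable.of_nonneg_of_le (fun δ => mul_nonneg (c_pos δ m).le (Real.exp_pos _).le)
    (fun δ => ?_) hpi
  have hprod : ∀ δ : Fin ℓ → ℕ+, (∏ j, g (δ j)) =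
      (∏ j, ((δ j : ℕ) : ℝ) ^ K) * ∏ j, Real.exp (-((δ j : ℕ) : ℝ) * s) := fun δ =>
    Finset.prod_mul_distrib
  rw [hprod]
  have h1 : c ℓ δ m ≤ ∏ j, ((δ j : ℕ) : ℝ) ^ K := by
    refine Finset.prod_le_prod (fun j _ => (zpow_pos (delta_pos δ j) _).le) fun j _ => ?_
    rw [← zpow_natCast]
    refine zpow_le_zpow_right₀ (one_le_delta δ j) ?_
    have h2 : m - 1 - (j : ℤ) ≤ m - 1 := by
      have : (0 : ℤ) ≤ (j : ℤ) := Int.ofNat_nonneg _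
      omega
    exact h2.trans (Int.self_le_toNat _)
  have h2 : Real.exp (-(P ℓ δ) * t) ≤ ∏ j, Real.exp (-((δ j : ℕ) : ℝ) * s) := by
    rw [← Real.exp_sum]
    apply Real.exp_le_exp.2
    have hsum : ∑ j, -((δ j : ℕ) : ℝ) * s = -(∑ j, ((δ j : ℕ) : ℝ)) * s := by
      simp [neg_mul, ← Finset.sum_mul]
    rw [hsum]
    have hle : (∑ j, ((δ j : ℕ) : ℝ)) ≤ ℓ * P ℓ δ := by
      have : ∀ j : Fin ℓ, ((δ j : ℕ) : ℝ) ≤ P ℓ δ := fun j => by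
        have := Finset.prod_le_prod (s := Finset.univ)
          (f := fun i : Fin ℓ => if i = j then ((δ j : ℕ) : ℝ) else 1)
          (g := fun i : Fin ℓ => ((δ i : ℕ) : ℝ))
          (fun i _ => by split <;> [positivity; norm_num])
          (fun i _ => by by_cases hij : i = j
                         · subst hij; simp
                         · simp [hij, one_le_delta δ i])
        unfold P
        simpa using this
      calc (∑ j, ((δ j : ℕ) : ℝ)) ≤ ∑ _j : Fin ℓ, P ℓ δ :=
            Finset.sum_le_sum fun j _ => this j
        _ = ℓ * P ℓ δ := by simp [Finset.sum_const]
    have : (∑ j, ((δ j : ℕ) : ℝ)) * s ≤ P ℓ δ * t := by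
      rw [hs]
      calc (∑ j, ((δ j : ℕ) : ℝ)) * (t / ℓ) ≤ (ℓ * P ℓ δ) * (t / ℓ) := by
            apply mul_le_mul_of_nonneg_right hle (by positivity)
        _ = P ℓ δ * t := by field_simp
    linarith
  calc c ℓ δ m * Real.exp (-(P ℓ δ) * t)
      ≤ (∏ j, ((δ j : ℕ) : ℝ) ^ K) * Real.exp (-(P ℓ δ) * t) :=
        mul_le_mul_of_nonneg_right h1 (Real.exp_pos _).le
    _ ≤ (∏ j, ((δ j : ℕ) : ℝ) ^ K) * ∏ j, Real.exp (-((δ j : ℕ) : ℝ) * s) :=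
        mul_le_mul_of_nonneg_left h2
          (Finset.prod_nonneg fun j _ => pow_nonneg (by positivity) _)

end ZAux

open ZAux in
theorem Z_sq_lt_mul (ℓ : ℕ) (hℓ : 1 ≤ ℓ) (m : ℤ) (t : ℝ) (ht : 0 < t) :
    (Z ℓ m t) ^ 2 < Z ℓ (m - 1) t * Z ℓ (m + 1) t := by
  classical
  set f : (Fin ℓ → ℕ+) → ℝ := fun δ => c ℓ δ (m - 1) * Real.exp (-(P ℓ δ) * t) with hf
  have hf_pos : ∀ δ, 0 < f δ := fun δ => mul_pos (c_pos δ _) (Real.exp_pos _)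
  have hfnn : ∀ δ, 0 ≤ f δ := fun δ => (hf_pos δ).le
  -- the three series
  have hZ0 : Z ℓ (m - 1) t = ∑' δ, f δ := Z_eq ℓ (m - 1) t
  have hZ1 : Z ℓ m t = ∑' δ, f δ * P ℓ δ := by
    rw [Z_eq]
    refine tsum_congr fun δ => ?_
    have : c ℓ δ m = c ℓ δ (m - 1) * P ℓ δ := by
      have := c_succ δ (m - 1); rwa [sub_add_cancel] at this
    rw [this, hf]; ring
  have hZ2 : Z ℓ (m + 1) t = ∑' δ, f δ * P ℓ δ ^ 2 := by
    rw [Z_eq]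
    refine tsum_congr fun δ => ?_
    have h1 : c ℓ δ m = c ℓ δ (m - 1) * P ℓ δ := by
      have := c_succ δ (m - 1); rwa [sub_add_cancel] at this
    have h2 : c ℓ δ (m + 1) = c ℓ δ m * P ℓ δ := c_succ δ m
    rw [h2, h1, hf]; ring
  -- summability
  have S0 : Summable f := summable_Z ℓ hℓ (m - 1) ht
  have S1 : Summable (fun δ => f δ * P ℓ δ) := by
    refine (summable_Z ℓ hℓ m ht).congr fun δ => ?_
    have : c ℓ δ m = c ℓ δ (m - 1) * P ℓ δ := by
      have := c_succ δ (m - 1); rwa [sub_add_cancel] at this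
    rw [this, hf]; ring
  have S2 : Summable (fun δ => f δ * P ℓ δ ^ 2) := by
    refine (summable_Z ℓ hℓ (m + 1) ht).congr fun δ => ?_
    have h1 : c ℓ δ m = c ℓ δ (m - 1) * P ℓ δ := by
      have := c_succ δ (m - 1); rwa [sub_add_cancel] at this
    rw [c_succ δ m, h1, hf]; ring
  have hPnn : ∀ δ, 0 ≤ P ℓ δ := fun δ => (P_pos δ).le
  have h1nn : ∀ δ, 0 ≤ f δ * P ℓ δ := fun δ => mul_nonneg (hfnn δ) (hPnn δ)
  have h2nn : ∀ δ, 0 ≤ f δ * P ℓ δ ^ 2 := fun δ => mul_nonneg (hfnn δ) (sq_nonneg _)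
  -- double sums
  have SG : Summable (fun p : (Fin ℓ → ℕ+) × (Fin ℓ → ℕ+) =>
      (f p.1 * P ℓ p.1) * (f p.2 * P ℓ p.2)) :=
    Summable.mul_of_nonneg (f := fun δ => f δ * P ℓ δ) (g := fun δ => f δ * P ℓ δ)
      S1 S1 h1nn h1nn
  have SH : Summable (fun p : (Fin ℓ → ℕ+) × (Fin ℓ → ℕ+) =>
      f p.1 * (f p.2 * P ℓ p.2 ^ 2)) :=
    Summable.mul_of_nonneg (f := f) (g := fun δ => f δ * P ℓ δ ^ 2) S0 S2 hfnn h2nn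
  have SH' : Summable (fun p : (Fin ℓ → ℕ+) × (Fin ℓ → ℕ+) =>
      (f p.1 * P ℓ p.1 ^ 2) * f p.2) :=
    Summable.mul_of_nonneg (f := fun δ => f δ * P ℓ δ ^ 2) (g := f) S2 S0 h2nn hfnn
  have eB : (Z ℓ m t) ^ 2 = ∑' p : (Fin ℓ → ℕ+) × (Fin ℓ → ℕ+),
      (f p.1 * P ℓ p.1) * (f p.2 * P ℓ p.2) := by
    rw [hZ1, sq]; exact Summable.tsum_mul_tsum S1 S1 SG
  have eAC : Z ℓ (m - 1) t * Z ℓ (m + 1) t = ∑' p : (Fin ℓ → ℕ+) × (Fin ℓ → ℕ+),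
      f p.1 * (f p.2 * P ℓ p.2 ^ 2) := by
    rw [hZ0, hZ2]; exact Summable.tsum_mul_tsum S0 S2 SH
  have eCA : Z ℓ (m - 1) t * Z ℓ (m + 1) t = ∑' p : (Fin ℓ → ℕ+) × (Fin ℓ → ℕ+),
      (f p.1 * P ℓ p.1 ^ 2) * f p.2 := by
    rw [mul_comm, hZ0, hZ2]; exact Summable.tsum_mul_tsum S2 S0 SH'
  -- it suffices to prove the doubled inequality
  rw [← mul_lt_mul_iff_right₀ (show (0:ℝ) < 2 by norm_num)]
  have lhs_eq : 2 * (Z ℓ m t) ^ 2 = ∑' p : (Fin ℓ → ℕ+) × (Fin ℓ → ℕ+),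
      ((f p.1 * P ℓ p.1) * (f p.2 * P ℓ p.2) + (f p.1 * P ℓ p.1) * (f p.2 * P ℓ p.2)) := by
    rw [Summable.tsum_add SG SG, ← eB]; ring
  have rhs_eq : 2 * (Z ℓ (m - 1) t * Z ℓ (m + 1) t) = ∑' p : (Fin ℓ → ℕ+) × (Fin ℓ → ℕ+),
      (f p.1 * (f p.2 * P ℓ p.2 ^ 2) + (f p.1 * P ℓ p.1 ^ 2) * f p.2) := by
    rw [Summable.tsum_add SH SH', ← eAC, ← eCA]; ring
  rw [lhs_eq, rhs_eq]
  -- the strict comparison point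
  have hℓpos : 0 < ℓ := hℓ
  set d1 : Fin ℓ → ℕ+ := fun _ => 1 with hd1
  set d2 : Fin ℓ → ℕ+ := fun _ => 2 with hd2
  have hP1 : P ℓ d1 = 1 := by simp [P, hd1]
  have hP2 : P ℓ d2 = 2 ^ ℓ := by simp [P, hd2]
  have hPne : P ℓ d1 ≠ P ℓ d2 := by
    rw [hP1, hP2]
    have : (2:ℝ) ≤ 2 ^ ℓ := by
      calc (2:ℝ) = 2 ^ 1 := (pow_one 2).symm
      _ ≤ 2 ^ ℓ := pow_le_pow_right₀ one_le_two hℓ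
    linarith
  refine Summable.tsum_lt_tsum (i := (d1, d2)) (fun p => ?_) ?_ (SG.add SG) (SH.add SH')
  · have hA := hfnn p.1
    have hB := hfnn p.2
    nlinarith [mul_nonneg hA hB, sq_nonneg (P ℓ p.1 - P ℓ p.2),
      mul_nonneg (mul_nonneg hA hB) (sq_nonneg (P ℓ p.1 - P ℓ p.2))]
  · have hA := hf_pos d1
    have hB := hf_pos d2
    have hsq : 0 < (P ℓ d1 - P ℓ d2) ^ 2 := by
      apply sq_pos_of_ne_zero
      exact sub_ne_zero.mpr hPne
    nlinarith [mul_pos hA hB, mul_pos (mul_pos hA hB) hsq]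
end

section
/- For every integer ℓ ≥ 1 and every integer m, Z_m^{[ℓ]}(t) ~ e^{-t} as t → ∞, i.e., the ratio Z_m^{[ℓ]}(t)/e^{-t} tends to 1 as t → ∞. -/
noncomputable def Zterm (ℓ : ℕ) (m : ℤ) (δ : Fin ℓ → ℕ+) (t : ℝ) : ℝ :=
  (∏ j, ((δ j : ℕ) : ℝ) ^ (m - 1 - (j : ℤ))) *
    Real.exp (-(∏ j, ((δ j : ℕ) : ℝ)) * t)

lemma Zterm_nonneg (ℓ : ℕ) (m : ℤ) (δ : Fin ℓ → ℕ+) (t : ℝ) :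
    0 ≤ Zterm ℓ m δ t := by
  refine mul_nonneg (Finset.prod_nonneg fun j _ => zpow_nonneg (by positivity) _)
    (Real.exp_pos _).le

lemma Zterm_one (ℓ : ℕ) (m : ℤ) (t : ℝ) :
    Zterm ℓ m (fun _ => 1) t = Real.exp (-t) := by
  simp [Zterm]

lemma summable_aux (K : ℕ) {c : ℝ} (hc : 0 < c) :
    Summable (fun n : ℕ+ => (n : ℝ) ^ K * Real.exp (-(n : ℝ) * c)) := by
  have h2 := summable_pow_mul_geometric_of_norm_lt_one (R := ℝ) K
    (r := Real.exp (-c)) (by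
      rw [Real.norm_eq_abs, abs_of_pos (Real.exp_pos _)]
      exact Real.exp_lt_one_iff.mpr (by linarith))
  have h1 : Summable (fun n : ℕ => (n : ℝ) ^ K * Real.exp (-(n : ℝ) * c)) := by
    refine h2.congr fun n => ?_
    rw [← Real.exp_nat_mul]
    ring_nf
  exact h1.comp_injective (fun a b h => PNat.coe_injective h)

lemma summable_pi_prod {f : ℕ+ → ℝ} (hf : Summable f) (hf0 : ∀ n, 0 ≤ f n) :
    ∀ ℓ : ℕ, Summable (fun δ : Fin ℓ → ℕ+ => ∏ j, f (δ j)) := by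
  intro ℓ
  induction ℓ with
  | zero =>
    haveI : Finite (Fin 0 → ℕ+) := Finite.of_subsingleton
    exact Summable.of_finite
  | succ n ih =>
    have hx : (0 : ℕ+ → ℝ) ≤ f := fun k => hf0 k
    have hy : (0 : (Fin n → ℕ+) → ℝ) ≤ (fun δ : Fin n → ℕ+ => ∏ j, f (δ j)) :=
      fun δ => Finset.prod_nonneg fun j _ => hf0 _
    have h := Summable.mul_of_nonneg hf ih hx hy
    have hinj : Function.Injective (fun δ : Fin (n+1) → ℕ+ =>
        ((δ 0, fun i => δ i.succ) : ℕ+ × (Fin n → ℕ+))) := by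
      intro a b hab
      simp only [Prod.mk.injEq] at hab
      funext i
      refine Fin.cases ?_ ?_ i
      · exact hab.1
      · intro i; exact congrFun hab.2 i
    have h2 := h.comp_injective hinj
    refine h2.congr fun δ => ?_
    simp [Function.comp, Fin.prod_univ_succ]

lemma sum_le_prod_add : ∀ (n : ℕ) (g : Fin n → ℝ), (∀ j, 1 ≤ g j) →
    ∑ j, g j ≤ ∏ j, g j + ((n : ℝ) - 1) := by
  intro n
  induction n with
  | zero => intro g _; simp
  | succ k ih =>
    intro g hg
    rw [Fin.sum_univ_succ, Fin.prod_univ_succ]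
    have h1 := ih (fun j => g j.succ) (fun j => hg _)
    have hP : (1 : ℝ) ≤ ∏ j : Fin k, g j.succ := by
      calc (1 : ℝ) = ∏ _j : Fin k, (1 : ℝ) := by simp
        _ ≤ ∏ j : Fin k, g j.succ :=
          Finset.prod_le_prod (fun j _ => zero_le_one) (fun j _ => hg _)
    have h0 := hg 0
    push_cast
    nlinarith [mul_nonneg (sub_nonneg.mpr h0) (sub_nonneg.mpr hP)]

lemma summable_Zterm (ℓ : ℕ) (m : ℤ) {t : ℝ} (ht : 0 < t) :
    Summable (fun δ : Fin ℓ → ℕ+ => Zterm ℓ m δ t) := by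
  set K := (m - 1).toNat with hK
  have hf : Summable (fun n : ℕ+ => (n : ℝ) ^ K * Real.exp (-(n : ℝ) * t)) :=
    summable_aux K ht
  have hf0 : ∀ n : ℕ+, 0 ≤ (n : ℝ) ^ K * Real.exp (-(n : ℝ) * t) :=
    fun n => mul_nonneg (by positivity) (Real.exp_pos _).le
  have hsum := (summable_pi_prod hf hf0 ℓ).mul_left (Real.exp (((ℓ : ℝ) - 1) * t))
  refine Summable.of_nonneg_of_le (fun δ => Zterm_nonneg ℓ m δ t) (fun δ => ?_) hsum
  set x : Fin ℓ → ℝ := fun j => ((δ j : ℕ) : ℝ) with hxdef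
  have hx1 : ∀ j, 1 ≤ x j := fun j => by
    have h : 1 ≤ (δ j : ℕ) := (δ j).pos
    show (1 : ℝ) ≤ ((δ j : ℕ) : ℝ)
    exact_mod_cast h
  have hx0 : ∀ j, 0 ≤ x j := fun j => le_trans zero_le_one (hx1 j)
  have ha : (∏ j, x j ^ (m - 1 - (j : ℤ))) ≤ ∏ j, x j ^ K := by
    apply Finset.prod_le_prod
    · intro j _; exact zpow_nonneg (hx0 j) _
    · intro j _
      rw [← zpow_natCast (x j) K]
      apply zpow_le_zpow_right₀ (hx1 j)
      have h2 : m - 1 ≤ (K : ℤ) := Int.self_le_toNat _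
      have hj : (0 : ℤ) ≤ ((j : ℕ) : ℤ) := Int.natCast_nonneg _
      linarith
  have hb : Real.exp (-(∏ j, x j) * t) ≤
      Real.exp (((ℓ : ℝ) - 1) * t) * ∏ j, Real.exp (-(x j) * t) := by
    rw [← Real.exp_sum, ← Real.exp_add]
    apply Real.exp_le_exp.mpr
    have hs : (∑ j, -(x j) * t) = -(∑ j, x j) * t := by
      simp only [neg_mul]
      rw [Finset.sum_neg_distrib, ← Finset.sum_mul]
    rw [hs]
    have hsum2 := sum_le_prod_add ℓ x hx1
    nlinarith [mul_le_mul_of_nonneg_right hsum2 ht.le]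
  calc (∏ j, x j ^ (m - 1 - (j : ℤ))) * Real.exp (-(∏ j, x j) * t)
      ≤ (∏ j, x j ^ K) *
        (Real.exp (((ℓ : ℝ) - 1) * t) * ∏ j, Real.exp (-(x j) * t)) :=
        mul_le_mul ha hb (Real.exp_pos _).le
          (Finset.prod_nonneg fun j _ => pow_nonneg (hx0 j) _)
    _ = Real.exp (((ℓ : ℝ) - 1) * t) *
        ∏ j, (x j ^ K * Real.exp (-(x j) * t)) := by
        rw [Finset.prod_mul_distrib]; ring

lemma two_le_prod {ℓ : ℕ} {δ : Fin ℓ → ℕ+} (hδ : δ ≠ fun _ => 1) :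
    (2 : ℝ) ≤ ∏ j, ((δ j : ℕ) : ℝ) := by
  have : ∃ j, δ j ≠ 1 := by
    by_contra h
    push_neg at h
    exact hδ (funext h)
  obtain ⟨j0, hj0⟩ := this
  have h2 : 2 ≤ (δ j0 : ℕ) := by
    have h1 : 1 ≤ (δ j0 : ℕ) := (δ j0).pos
    rcases Nat.lt_or_ge (δ j0 : ℕ) 2 with h | h
    · exfalso; apply hj0
      have : (δ j0 : ℕ) = 1 := by omega
      exact PNat.coe_injective this
    · exact h
  have hle : (δ j0 : ℕ) ≤ ∏ j, (δ j : ℕ) :=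
    Finset.single_le_prod' (f := fun i => ((δ i : ℕ))) (fun i _ => (δ i).pos)
      (Finset.mem_univ j0)
  have : (2 : ℕ) ≤ ∏ j, (δ j : ℕ) := le_trans h2 hle
  calc (2 : ℝ) ≤ ((∏ j, (δ j : ℕ) : ℕ) : ℝ) := by exact_mod_cast this
    _ = ∏ j, ((δ j : ℕ) : ℝ) := by push_cast; rfl

theorem Z_asymp_exp (ℓ : ℕ) (hℓ : 1 ≤ ℓ) (m : ℤ) :
    Filter.Tendsto (fun t : ℝ => Z ℓ m t / Real.exp (-t)) Filter.atTop (nhds 1) := by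
  classical
  set one : Fin ℓ → ℕ+ := fun _ => 1 with hone
  set C : ℝ := ∑' δ : Fin ℓ → ℕ+, Zterm ℓ m δ 1 with hC
  -- the remainder
  set R : ℝ → ℝ := fun t => ∑' δ : Fin ℓ → ℕ+,
    (if δ = one then 0 else Zterm ℓ m δ t) with hR
  have hZsplit : ∀ t : ℝ, 0 < t → Z ℓ m t = Real.exp (-t) + R t := by
    intro t ht
    have hs := summable_Zterm ℓ m ht
    have h := Summable.tsum_eq_add_tsum_ite hs one
    rw [show Zterm ℓ m one t = Real.exp (-t) from Zterm_one ℓ m t] at h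
    exact h
  have hR0 : ∀ t : ℝ, 0 ≤ R t := by
    intro t
    refine tsum_nonneg fun δ => ?_
    split <;> [exact le_refl 0; exact Zterm_nonneg _ _ _ _]
  have hRbound : ∀ t : ℝ, 1 ≤ t → R t ≤ C * Real.exp (-2 * (t - 1)) := by
    intro t ht
    have h1t : (0 : ℝ) < t := by linarith
    have hs1 : Summable (fun δ : Fin ℓ → ℕ+ => Zterm ℓ m δ 1) :=
      summable_Zterm ℓ m one_pos
    have hs2 : Summable (fun δ : Fin ℓ → ℕ+ =>
        Zterm ℓ m δ 1 * Real.exp (-2 * (t - 1))) := hs1.mul_right _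
    have hst : Summable (fun δ : Fin ℓ → ℕ+ =>
        if δ = one then 0 else Zterm ℓ m δ t) := by
      refine Summable.of_nonneg_of_le (fun δ => ?_) (fun δ => ?_)
        (summable_Zterm ℓ m h1t)
      · split <;> [exact le_refl 0; exact Zterm_nonneg _ _ _ _]
      · split
        · exact Zterm_nonneg _ _ _ _
        · exact le_refl _
    have hterm : ∀ δ : Fin ℓ → ℕ+,
        (if δ = one then 0 else Zterm ℓ m δ t) ≤
          Zterm ℓ m δ 1 * Real.exp (-2 * (t - 1)) := by
      intro δ
      split
      · exact mul_nonneg (Zterm_nonneg _ _ _ _) (Real.exp_pos _).le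
      · rename_i hδ
        have hP := two_le_prod (ℓ := ℓ) (δ := δ) hδ
        unfold Zterm
        rw [mul_assoc]
        apply mul_le_mul_of_nonneg_left _
          (Finset.prod_nonneg fun j _ => zpow_nonneg (by positivity) _)
        rw [← Real.exp_add]
        apply Real.exp_le_exp.mpr
        nlinarith
    calc R t ≤ ∑' δ : Fin ℓ → ℕ+, Zterm ℓ m δ 1 * Real.exp (-2 * (t - 1)) :=
          Summable.tsum_le_tsum hterm hst hs2
      _ = C * Real.exp (-2 * (t - 1)) := tsum_mul_right
  -- now the squeeze
  have hratio : ∀ t : ℝ, 1 ≤ t →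
      Z ℓ m t / Real.exp (-t) = 1 + R t * Real.exp t := by
    intro t ht
    rw [hZsplit t (by linarith)]
    rw [Real.exp_neg]
    field_simp
  have hub : Filter.Tendsto (fun t : ℝ => C * Real.exp 2 * Real.exp (-t))
      Filter.atTop (nhds 0) := by
    have := Real.tendsto_exp_neg_atTop_nhds_zero.const_mul (C * Real.exp 2)
    simpa using this
  have hmain : Filter.Tendsto (fun t : ℝ => R t * Real.exp t)
      Filter.atTop (nhds 0) := by
    apply tendsto_of_tendsto_of_tendsto_of_le_of_le' tendsto_const_nhds hub
    · filter_upwards [Filter.eventually_ge_atTop (1 : ℝ)] with t ht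
      exact mul_nonneg (hR0 t) (Real.exp_pos _).le
    · filter_upwards [Filter.eventually_ge_atTop (1 : ℝ)] with t ht
      have h1 := hRbound t ht
      have h2 : R t * Real.exp t ≤ C * Real.exp (-2 * (t - 1)) * Real.exp t :=
        mul_le_mul_of_nonneg_right h1 (Real.exp_pos _).le
      calc R t * Real.exp t ≤ C * Real.exp (-2 * (t - 1)) * Real.exp t := h2
        _ = C * Real.exp 2 * Real.exp (-t) := by
            rw [mul_assoc, mul_assoc, ← Real.exp_add, ← Real.exp_add]
            ring_nf
  have hfinal : Filter.Tendsto (fun t : ℝ => 1 + R t * Real.exp t)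
      Filter.atTop (nhds 1) := by
    have := hmain.const_add (1 : ℝ)
    simpa using this
  apply hfinal.congr'
  filter_upwards [Filter.eventually_ge_atTop (1 : ℝ)] with t ht
  exact (hratio t ht).symm
end

section
/- For ℓ ≥ 2, the function h_ℓ(t) := (ℓ−1) · Z_{ℓ−1}^{[ℓ]}(t) / Z_ℓ^{[ℓ]}(t) is strictly increasing on (0,∞); in particular its derivative h_ℓ'(t) = (ℓ−1) (Z_{ℓ+1}^{[ℓ]}(t) Z_{ℓ−1}^{[ℓ]}(t) − Z_ℓ^{[ℓ]}(t)²) / Z_ℓ^{[ℓ]}(t)² is strictly positive for all t > 0. -/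
noncomputable def h (ℓ : ℕ) (t : ℝ) : ℝ :=
  ((ℓ : ℝ) - 1) * Z ℓ ((ℓ : ℤ) - 1) t / Z ℓ (ℓ : ℤ) t

namespace ZAux

/-- The product of the entries, as a real number. -/
noncomputable def E (ℓ : ℕ) (δ : Fin ℓ → ℕ+) : ℝ := ∏ j, ((δ j : ℕ) : ℝ)

/-- One term of the series defining `Z`. -/
noncomputable def term (ℓ : ℕ) (m : ℤ) (t : ℝ) (δ : Fin ℓ → ℕ+) : ℝ :=
  (∏ j, ((δ j : ℕ) : ℝ) ^ (m - 1 - (j : ℤ))) * Real.exp (-(∏ j, ((δ j : ℕ) : ℝ)) * t)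

lemma Z_eq_s4 (ℓ : ℕ) (m : ℤ) (t : ℝ) : Z ℓ m t = ∑' δ, term ℓ m t δ := rfl

lemma one_le_coe (x : ℕ+) : (1 : ℝ) ≤ ((x : ℕ) : ℝ) := by exact_mod_cast x.one_le

lemma coe_pos (x : ℕ+) : (0 : ℝ) < ((x : ℕ) : ℝ) := lt_of_lt_of_le one_pos (one_le_coe x)

lemma one_le_E (ℓ : ℕ) (δ : Fin ℓ → ℕ+) : 1 ≤ E ℓ δ := by
  unfold E
  calc (1 : ℝ) = ∏ _j : Fin ℓ, (1 : ℝ) := by simp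
    _ ≤ ∏ j, ((δ j : ℕ) : ℝ) :=
      Finset.prod_le_prod (by intros; norm_num) fun j _ => one_le_coe (δ j)

lemma E_pos (ℓ : ℕ) (δ : Fin ℓ → ℕ+) : 0 < E ℓ δ := lt_of_lt_of_le one_pos (one_le_E ℓ δ)

lemma term_pos (ℓ : ℕ) (m : ℤ) (t : ℝ) (δ : Fin ℓ → ℕ+) : 0 < term ℓ m t δ := by
  apply mul_pos _ (Real.exp_pos _)
  exact Finset.prod_pos fun j _ => zpow_pos (coe_pos (δ j)) _

lemma term_succ (ℓ : ℕ) (m : ℤ) (t : ℝ) (δ : Fin ℓ → ℕ+) :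
    term ℓ (m + 1) t δ = E ℓ δ * term ℓ m t δ := by
  have key : (∏ j : Fin ℓ, ((δ j : ℕ) : ℝ) ^ (m + 1 - 1 - (j : ℤ))) =
      (∏ j, ((δ j : ℕ) : ℝ)) * ∏ j : Fin ℓ, ((δ j : ℕ) : ℝ) ^ (m - 1 - (j : ℤ)) := by
    rw [← Finset.prod_mul_distrib]
    refine Finset.prod_congr rfl fun j _ => ?_
    rw [show m + 1 - 1 - (j : ℤ) = (m - 1 - (j : ℤ)) + 1 by ring,
      zpow_add_one₀ (ne_of_gt (coe_pos (δ j)))]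
    ring
  unfold term E
  rw [key]
  ring

set_option maxHeartbeats 1000000 in
lemma summable_pi {f : ℕ+ → ℝ} (hf : Summable f) (hf0 : ∀ x, 0 ≤ f x) (ℓ : ℕ) :
    Summable (fun δ : Fin ℓ → ℕ+ => ∏ j, f (δ j)) := by
  induction ℓ with
  | zero =>
    haveI : Unique (Fin 0 → ℕ+) := ⟨⟨fun i => i.elim0⟩, fun f => funext fun i => i.elim0⟩
    exact .of_finite
  | succ n ih =>
    have h2 : (0 : (Fin n → ℕ+) → ℝ) ≤ fun δ => ∏ j, f (δ j) :=
      fun δ => Finset.prod_nonneg fun j _ => hf0 _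
    have key := Summable.mul_of_nonneg (f := f) (g := fun δ : Fin n → ℕ+ => ∏ j, f (δ j))
      hf ih (fun x => hf0 x) h2
    have := ((Fin.consEquiv fun _ : Fin (n + 1) => ℕ+).symm.summable_iff
      (f := fun p : ℕ+ × (Fin n → ℕ+) => f p.1 * ∏ j, f (p.2 j))).mpr key
    refine this.congr fun δ => ?_
    rw [Fin.prod_univ_succ]
    rfl

lemma summable_g (K : ℕ) {c : ℝ} (hc : 0 < c) :
    Summable (fun x : ℕ+ => ((x : ℕ) : ℝ) ^ (K : ℤ) * Real.exp (-((x : ℕ) : ℝ) * c)) := by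
  have h1 : Summable (fun n : ℕ => (n : ℝ) ^ K * Real.exp (-c * n)) :=
    Real.summable_pow_mul_exp_neg_nat_mul K hc
  have h2 := h1.comp_injective (i := fun x : ℕ+ => (x : ℕ)) (fun a b hab => PNat.coe_injective hab)
  refine h2.congr fun x => ?_
  simp only [Function.comp]
  rw [zpow_natCast]
  ring_nf

lemma summable_term (ℓ : ℕ) (hℓ : 0 < ℓ) (m : ℤ) {t : ℝ} (ht : 0 < t) :
    Summable (term ℓ m t) := by
  set K : ℕ := m.natAbs with hK
  have hc : 0 < t / ℓ := div_pos ht (by exact_mod_cast hℓ)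
  set g : ℕ+ → ℝ := fun x => ((x : ℕ) : ℝ) ^ (K : ℤ) * Real.exp (-((x : ℕ) : ℝ) * (t / ℓ))
    with hg
  have hg0 : ∀ x, 0 ≤ g x := fun x =>
    mul_nonneg (zpow_nonneg (coe_pos x).le _) (Real.exp_pos _).le
  have hgs : Summable g := summable_g K hc
  have hsum : Summable (fun δ : Fin ℓ → ℕ+ => ∏ j, g (δ j)) := summable_pi hgs hg0 ℓ
  refine Summable.of_nonneg_of_le (fun δ => (term_pos ℓ m t δ).le) (fun δ => ?_) hsum
  have hprod : (∏ j, g (δ j)) =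
      (∏ j, ((δ j : ℕ) : ℝ) ^ (K : ℤ)) * ∏ j, Real.exp (-((δ j : ℕ) : ℝ) * (t / ℓ)) := by
    rw [← Finset.prod_mul_distrib]
  rw [hprod]
  unfold term
  have h1 : (∏ j : Fin ℓ, ((δ j : ℕ) : ℝ) ^ (m - 1 - (j : ℤ))) ≤
      ∏ j : Fin ℓ, ((δ j : ℕ) : ℝ) ^ (K : ℤ) := by
    refine Finset.prod_le_prod (fun j _ => (zpow_pos (coe_pos (δ j)) _).le) fun j _ => ?_
    refine zpow_le_zpow_right₀ (one_le_coe (δ j)) ?_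
    have : m ≤ (K : ℤ) := Int.le_natAbs
    omega
  have h2 : Real.exp (-(∏ j, ((δ j : ℕ) : ℝ)) * t) ≤
      ∏ j, Real.exp (-((δ j : ℕ) : ℝ) * (t / ℓ)) := by
    rw [← Real.exp_sum]
    apply Real.exp_le_exp.mpr
    have hsum_le : (∑ j : Fin ℓ, ((δ j : ℕ) : ℝ)) ≤ (ℓ : ℝ) * E ℓ δ := by
      have : ∀ j : Fin ℓ, ((δ j : ℕ) : ℝ) ≤ E ℓ δ := by
        intro j
        have hrest : (1 : ℝ) ≤ ∏ i ∈ Finset.univ.erase j, ((δ i : ℕ) : ℝ) :=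
          calc (1 : ℝ) = ∏ _i ∈ Finset.univ.erase j, (1 : ℝ) := by simp
            _ ≤ _ := Finset.prod_le_prod (by intros; norm_num) fun i _ => one_le_coe (δ i)
        have hsplit := Finset.mul_prod_erase Finset.univ (fun i => ((δ i : ℕ) : ℝ))
          (Finset.mem_univ j)
        calc ((δ j : ℕ) : ℝ) = ((δ j : ℕ) : ℝ) * 1 := (mul_one _).symm
          _ ≤ ((δ j : ℕ) : ℝ) * ∏ i ∈ Finset.univ.erase j, ((δ i : ℕ) : ℝ) :=
              mul_le_mul_of_nonneg_left hrest (coe_pos (δ j)).le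
          _ = E ℓ δ := hsplit
      calc (∑ j : Fin ℓ, ((δ j : ℕ) : ℝ)) ≤ ∑ _j : Fin ℓ, E ℓ δ :=
            Finset.sum_le_sum fun j _ => this j
        _ = (ℓ : ℝ) * E ℓ δ := by simp [mul_comm]
    have hE : (∏ j, ((δ j : ℕ) : ℝ)) = E ℓ δ := rfl
    rw [hE]
    have : (∑ j : Fin ℓ, -((δ j : ℕ) : ℝ) * (t / ℓ)) =
        -(∑ j : Fin ℓ, ((δ j : ℕ) : ℝ)) * (t / ℓ) := by
      rw [← Finset.sum_mul, ← Finset.sum_neg_distrib]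
    rw [this]
    have hℓR : (0 : ℝ) < (ℓ : ℝ) := by exact_mod_cast hℓ
    rw [neg_mul, neg_mul, neg_le_neg_iff, div_eq_mul_inv, ← mul_assoc]
    calc (∑ j : Fin ℓ, ((δ j : ℕ) : ℝ)) * t * (ℓ : ℝ)⁻¹
        ≤ (ℓ : ℝ) * E ℓ δ * t * (ℓ : ℝ)⁻¹ := by
          apply mul_le_mul_of_nonneg_right (mul_le_mul_of_nonneg_right hsum_le ht.le)
            (inv_nonneg.mpr hℓR.le)
      _ = E ℓ δ * t := by field_simp
  calc (∏ j : Fin ℓ, ((δ j : ℕ) : ℝ) ^ (m - 1 - (j : ℤ))) *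
        Real.exp (-(∏ j, ((δ j : ℕ) : ℝ)) * t)
      ≤ (∏ j : Fin ℓ, ((δ j : ℕ) : ℝ) ^ (K : ℤ)) *
        ∏ j, Real.exp (-((δ j : ℕ) : ℝ) * (t / ℓ)) := by
        apply mul_le_mul h1 h2 (Real.exp_pos _).le
        exact Finset.prod_nonneg fun j _ => (zpow_pos (coe_pos (δ j)) _).le

lemma Z_pos (ℓ : ℕ) (hℓ : 0 < ℓ) (m : ℤ) {t : ℝ} (ht : 0 < t) : 0 < Z ℓ m t := by
  rw [Z_eq_s4]
  exact Summable.tsum_pos (summable_term ℓ hℓ m ht) (fun δ => (term_pos ℓ m t δ).le)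
    (fun _ => 1) (term_pos ℓ m t _)

lemma hasDerivAt_Z (ℓ : ℕ) (hℓ : 0 < ℓ) (m : ℤ) {t : ℝ} (ht : 0 < t) :
    HasDerivAt (Z ℓ m) (-(Z ℓ (m + 1) t)) t := by
  have ht2 : 0 < t / 2 := by linarith
  have key := hasDerivAt_tsum_of_isPreconnected
    (u := fun δ => term ℓ (m + 1) (t / 2) δ)
    (g := fun δ x => term ℓ m x δ)
    (g' := fun δ x => -(term ℓ (m + 1) x δ))
    (𝕜 := ℝ) (t := Set.Ioi (t / 2))
    (summable_term ℓ hℓ (m + 1) ht2) isOpen_Ioi isPreconnected_Ioi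
    (fun δ x _ => ?_) (fun δ x hx => ?_) (y₀ := t) ?_ ?_ (y := t) ?_
  · have : (fun z => ∑' δ, term ℓ m z δ) = Z ℓ m := by
      funext z; rw [Z_eq_s4]
    rw [this] at key
    have : (∑' δ, -(term ℓ (m + 1) t δ)) = -(Z ℓ (m + 1) t) := by
      rw [tsum_neg, Z_eq_s4]
    rwa [this] at key
  · -- HasDerivAt of a single term
    have hd := (((hasDerivAt_id x).const_mul (-(∏ j, ((δ j : ℕ) : ℝ)))).exp).const_mul
      (∏ j : Fin ℓ, ((δ j : ℕ) : ℝ) ^ (m - 1 - (j : ℤ)))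
    convert hd using 1
    show -(term ℓ (m + 1) x δ) = _
    rw [term_succ]
    simp only [term, E, id_eq]
    ring
    all_goals rfl
  · -- bound
    rw [norm_neg, Real.norm_of_nonneg (term_pos ℓ (m + 1) x δ).le]
    unfold term
    apply mul_le_mul_of_nonneg_left _ (Finset.prod_nonneg fun j _ =>
      (zpow_pos (coe_pos (δ j)) _).le)
    apply Real.exp_le_exp.mpr
    have hE : 0 < (∏ j, ((δ j : ℕ) : ℝ)) := E_pos ℓ δ
    have : t / 2 ≤ x := le_of_lt hx
    nlinarith
  · exact Set.mem_Ioi.mpr (by linarith)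
  · exact summable_term ℓ hℓ m ht
  · exact Set.mem_Ioi.mpr (by linarith)

lemma cauchy_schwarz (ℓ : ℕ) (hℓ : 0 < ℓ) (m : ℤ) {t : ℝ} (ht : 0 < t) :
    (Z ℓ m t) ^ 2 < Z ℓ (m + 1) t * Z ℓ (m - 1) t := by
  set b : (Fin ℓ → ℕ+) → ℝ := term ℓ (m - 1) t with hb
  set c : (Fin ℓ → ℕ+) → ℝ := term ℓ m t with hc
  set a : (Fin ℓ → ℕ+) → ℝ := term ℓ (m + 1) t with ha
  have hcb : ∀ δ, c δ = E ℓ δ * b δ := fun δ => by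
    have hts := term_succ ℓ (m - 1) t δ
    rw [sub_add_cancel] at hts
    rw [hc, hb, hts]
  have hac : ∀ δ, a δ = E ℓ δ * c δ := fun δ => term_succ ℓ m t δ
  have Sa : Summable a := summable_term ℓ hℓ _ ht
  have Sb : Summable b := summable_term ℓ hℓ _ ht
  have Sc : Summable c := summable_term ℓ hℓ _ ht
  have ha0 : ∀ δ, 0 ≤ a δ := fun δ => (term_pos ℓ _ t δ).le
  have hb0 : ∀ δ, 0 ≤ b δ := fun δ => (term_pos ℓ _ t δ).le
  have hc0 : ∀ δ, 0 ≤ c δ := fun δ => (term_pos ℓ _ t δ).le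
  have Sab : Summable (fun p : (Fin ℓ → ℕ+) × (Fin ℓ → ℕ+) => a p.1 * b p.2) :=
    Sa.mul_of_nonneg Sb ha0 hb0
  have Sba : Summable (fun p : (Fin ℓ → ℕ+) × (Fin ℓ → ℕ+) => b p.1 * a p.2) :=
    Sb.mul_of_nonneg Sa hb0 ha0
  have Scc : Summable (fun p : (Fin ℓ → ℕ+) × (Fin ℓ → ℕ+) => c p.1 * c p.2) :=
    Sc.mul_of_nonneg Sc hc0 hc0
  set F : (Fin ℓ → ℕ+) × (Fin ℓ → ℕ+) → ℝ :=
    fun p => (a p.1 * b p.2 + b p.1 * a p.2) - 2 * (c p.1 * c p.2) with hF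
  have hFval : ∀ p, F p = b p.1 * b p.2 * (E ℓ p.1 - E ℓ p.2) ^ 2 := by
    intro p
    rw [hF]
    simp only
    rw [hac p.1, hac p.2, hcb p.1, hcb p.2]
    ring
  have SF : Summable F := (Sab.add Sba).sub (Scc.mul_left 2)
  have htsum : ∑' p, F p =
      Z ℓ (m + 1) t * Z ℓ (m - 1) t + Z ℓ (m - 1) t * Z ℓ (m + 1) t -
        2 * (Z ℓ m t * Z ℓ m t) := by
    rw [hF, Summable.tsum_sub (Sab.add Sba) (Scc.mul_left 2), Summable.tsum_add Sab Sba, tsum_mul_left]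
    rw [Z_eq_s4, Z_eq_s4, Z_eq_s4, Summable.tsum_mul_tsum Sa Sb Sab, Summable.tsum_mul_tsum Sb Sa Sba,
      Summable.tsum_mul_tsum Sc Sc Scc]
  have hpos : 0 < ∑' p, F p := by
    refine Summable.tsum_pos SF (fun p => ?_) ((fun _ => 1, fun _ => 2)) ?_
    · rw [hFval p]
      exact mul_nonneg (mul_nonneg (hb0 _) (hb0 _)) (sq_nonneg _)
    · rw [hFval]
      simp only
      have hE1 : E ℓ (fun _ => (1 : ℕ+)) = 1 := by
        unfold E; simp
      have hE2 : E ℓ (fun _ => (2 : ℕ+)) = 2 ^ ℓ := by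
        unfold E; simp
      rw [hE1, hE2]
      have h2 : (1 : ℝ) < 2 ^ ℓ := by
        calc (1:ℝ) < 2 := one_lt_two
          _ ≤ 2 ^ ℓ := by
            calc (2:ℝ) = 2 ^ 1 := (pow_one 2).symm
              _ ≤ 2 ^ ℓ := pow_le_pow_right₀ one_le_two hℓ
      have hb1 := term_pos ℓ (m - 1) t (fun _ => (1 : ℕ+))
      have hb2 := term_pos ℓ (m - 1) t (fun _ => (2 : ℕ+))
      have hsq : (0:ℝ) < (1 - (2:ℝ) ^ ℓ) ^ 2 := by nlinarith
      exact mul_pos (mul_pos hb1 hb2) hsq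
  rw [htsum] at hpos
  nlinarith [hpos]

end ZAux

theorem h_strictMono (ℓ : ℕ) (hℓ : 2 ≤ ℓ) :
    StrictMonoOn (h ℓ) (Set.Ioi 0) ∧
      ∀ t : ℝ, 0 < t →
        HasDerivAt (h ℓ)
          (((ℓ : ℝ) - 1) *
            (Z ℓ ((ℓ : ℤ) + 1) t * Z ℓ ((ℓ : ℤ) - 1) t - (Z ℓ (ℓ : ℤ) t) ^ 2) /
              (Z ℓ (ℓ : ℤ) t) ^ 2) t ∧
        0 < ((ℓ : ℝ) - 1) *
            (Z ℓ ((ℓ : ℤ) + 1) t * Z ℓ ((ℓ : ℤ) - 1) t - (Z ℓ (ℓ : ℤ) t) ^ 2) /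
              (Z ℓ (ℓ : ℤ) t) ^ 2 := by
  have hℓ0 : 0 < ℓ := by omega
  have hℓ1 : (0 : ℝ) < (ℓ : ℝ) - 1 := by
    have : (2 : ℝ) ≤ (ℓ : ℝ) := by exact_mod_cast hℓ
    linarith
  have key : ∀ t : ℝ, 0 < t →
      HasDerivAt (h ℓ)
        (((ℓ : ℝ) - 1) *
          (Z ℓ ((ℓ : ℤ) + 1) t * Z ℓ ((ℓ : ℤ) - 1) t - (Z ℓ (ℓ : ℤ) t) ^ 2) /
            (Z ℓ (ℓ : ℤ) t) ^ 2) t ∧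
      0 < ((ℓ : ℝ) - 1) *
          (Z ℓ ((ℓ : ℤ) + 1) t * Z ℓ ((ℓ : ℤ) - 1) t - (Z ℓ (ℓ : ℤ) t) ^ 2) /
            (Z ℓ (ℓ : ℤ) t) ^ 2 := by
    intro t ht
    have hC : 0 < Z ℓ (ℓ : ℤ) t := ZAux.Z_pos ℓ hℓ0 _ ht
    have d1 : HasDerivAt (Z ℓ ((ℓ : ℤ) - 1)) (-(Z ℓ (ℓ : ℤ) t)) t := by
      have := ZAux.hasDerivAt_Z ℓ hℓ0 ((ℓ : ℤ) - 1) ht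
      rwa [sub_add_cancel] at this
    have d2 : HasDerivAt (Z ℓ (ℓ : ℤ)) (-(Z ℓ ((ℓ : ℤ) + 1) t)) t :=
      ZAux.hasDerivAt_Z ℓ hℓ0 (ℓ : ℤ) ht
    have hCS : (Z ℓ (ℓ : ℤ) t) ^ 2 < Z ℓ ((ℓ : ℤ) + 1) t * Z ℓ ((ℓ : ℤ) - 1) t :=
      ZAux.cauchy_schwarz ℓ hℓ0 (ℓ : ℤ) ht
    constructor
    · have hq := (d1.const_mul ((ℓ : ℝ) - 1)).div d2 (ne_of_gt hC)
      have hfun : h ℓ = fun u => ((ℓ : ℝ) - 1) * Z ℓ ((ℓ : ℤ) - 1) u / Z ℓ (ℓ : ℤ) u := rfl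
      rw [hfun]
      convert hq using 1
      any_goals rfl
      ring
    · apply div_pos
      · exact mul_pos hℓ1 (by linarith)
      · positivity
  refine ⟨?_, fun t ht => key t ht⟩
  apply strictMonoOn_of_deriv_pos (convex_Ioi 0)
  · intro x hx
    exact ((key x hx).1).continuousAt.continuousWithinAt
  · intro x hx
    rw [interior_Ioi] at hx
    rw [(key x hx).1.deriv]
    exact (key x hx).2
end

section
/- For every real t > 0 and every θ ∈ [−π, π], |sin θ| / (e^{2t} − 2 e^{t} cos θ + 1) ≤ 1 / (e^{2t} − 1). -/
open Real

theorem sin_div_bound (t θ : ℝ) (ht : 0 < t) (hθ : θ ∈ Set.Icc (-π) π) :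
    |Real.sin θ| / (Real.exp (2 * t) - 2 * Real.exp t * Real.cos θ + 1) ≤
      1 / (Real.exp (2 * t) - 1) := by
  have ha : 1 < Real.exp t := by
    calc 1 = Real.exp 0 := Real.exp_zero.symm
    _ < Real.exp t := Real.exp_lt_exp.mpr ht
  have h2 : Real.exp (2 * t) = Real.exp t ^ 2 := by
    rw [two_mul, Real.exp_add, sq]
  set a := Real.exp t with hadef
  rw [h2]
  have hc : Real.cos θ ≤ 1 := Real.cos_le_one θ
  have hden : 0 < a ^ 2 - 2 * a * Real.cos θ + 1 := by nlinarith [sq_nonneg (a - 1)]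
  have hden2 : 0 < a ^ 2 - 1 := by nlinarith
  rw [div_le_div_iff₀ hden hden2]
  have hs : |Real.sin θ| ≤ 1 := abs_sin_le_one θ
  have hs0 : 0 ≤ |Real.sin θ| := abs_nonneg _
  have hpy : Real.sin θ ^ 2 + Real.cos θ ^ 2 = 1 := Real.sin_sq_add_cos_sq θ
  have hsq : |Real.sin θ| ^ 2 = Real.sin θ ^ 2 := sq_abs _
  nlinarith [sq_nonneg (a * Real.cos θ - (1 + |Real.sin θ|)), hs0, sq_nonneg (a - 1)]
end

section
/- For real t > 0 and σ > max(0, Re α₁, …, Re α_ℓ), the function Z_{α₁,…,α_ℓ}^{[ℓ]}(t) := ∑_{δ₁,…,δ_ℓ ≥ 1} δ₁^{α₁−1}⋯δ_ℓ^{α_ℓ−1} e^{−δ₁⋯δ_ℓ t} admits the Mellin integral representation Z_{α₁,…,α_ℓ}^{[ℓ]}(t) = (1/2πi) ∫_{σ−i∞}^{σ+i∞} Γ(w) ζ(w+1−α₁) ⋯ ζ(w+1−α_ℓ) t^{−w} dw. -/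
open Complex

open MeasureTheory Set

lemma norm_Gamma_le {s : ℂ} (hs : 0 < s.re) : ‖Complex.Gamma s‖ ≤ Real.Gamma s.re := by
  rw [Complex.Gamma_eq_integral hs, Real.Gamma_eq_integral hs, Complex.GammaIntegral]
  refine (norm_integral_le_integral_norm _).trans_eq ?_
  refine setIntegral_congr_fun measurableSet_Ioi fun x hx => ?_
  rw [norm_mul, Complex.norm_real, Real.norm_eq_abs,
    _root_.abs_of_nonneg (Real.exp_pos _).le, Complex.norm_cpow_eq_rpow_re_of_pos hx]
  simp

lemma Gamma_line_continuous (σ : ℝ) (hσ : 0 < σ) :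
    Continuous fun y : ℝ => Complex.Gamma (σ + y * I) := by
  refine continuous_iff_continuousAt.mpr fun y => ?_
  refine (Complex.differentiableAt_Gamma _ fun m => ?_).continuousAt.comp (by fun_prop)
  intro h
  have := congrArg Complex.re h
  simp at this
  have : (0:ℝ) ≤ m := Nat.cast_nonneg m
  linarith

lemma Gamma_vertical_integrable {σ : ℝ} (hσ : 0 < σ) :
    Integrable fun y : ℝ => Complex.Gamma (σ + y * I) := by
  have hbd : ∀ y : ℝ, ‖Complex.Gamma (σ + y * I)‖ ≤ Real.Gamma (σ + 2) / (σ ^ 2 + y ^ 2) := by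
    intro y
    set s : ℂ := σ + y * I with hsdef
    have hre : s.re = σ := by simp [hsdef]
    have him : s.im = y := by simp [hsdef]
    have hs0 : s ≠ 0 := fun h => by rw [h] at hre; simp at hre; linarith
    have hs1 : s + 1 ≠ 0 := fun h => by
      have := congrArg Complex.re h
      simp [hre] at this; linarith
    have h1 : Complex.Gamma s = Complex.Gamma (s + 2) / (s * (s + 1)) := by
      rw [show s + 2 = (s + 1) + 1 by ring, Complex.Gamma_add_one _ hs1,
        Complex.Gamma_add_one _ hs0]
      field_simp
    have h2 : ‖Complex.Gamma (s + 2)‖ ≤ Real.Gamma (σ + 2) := by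
      have := norm_Gamma_le (s := s + 2) (by simp [hre]; linarith)
      simpa [hre] using this
    have h3 : σ ^ 2 + y ^ 2 ≤ ‖s * (s + 1)‖ := by
      rw [norm_mul]
      have e1 : ‖s‖ ^ 2 = σ ^ 2 + y ^ 2 := by
        rw [Complex.sq_norm, Complex.normSq_apply, hre, him]; ring
      have e2 : ‖s‖ ≤ ‖s + 1‖ := by
        rw [Complex.norm_def, Complex.norm_def]
        apply Real.sqrt_le_sqrt
        simp [Complex.normSq_apply, hre, him]
        nlinarith [hσ]
      calc σ ^ 2 + y ^ 2 = ‖s‖ * ‖s‖ := by rw [← e1]; ring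
        _ ≤ ‖s‖ * ‖s + 1‖ := by nlinarith [norm_nonneg s, norm_nonneg (s+1)]
    have hpos : 0 < σ ^ 2 + y ^ 2 := by positivity
    rw [h1, norm_div]
    exact div_le_div₀ (Real.Gamma_pos_of_pos (by linarith)).le h2 hpos h3
  have hgint : Integrable fun y : ℝ => Real.Gamma (σ + 2) / (σ ^ 2 + y ^ 2) := by
    have h1 : Integrable fun y : ℝ => (1 + (y / σ) ^ 2)⁻¹ :=
      integrable_inv_one_add_sq.comp_div hσ.ne'
    have h2 := (h1.const_mul (Real.Gamma (σ + 2) / σ ^ 2))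
    refine h2.congr (Filter.Eventually.of_forall fun y => ?_)
    have hy : (0:ℝ) < σ ^ 2 + y ^ 2 := by positivity
    field_simp
  refine hgint.mono' ((Gamma_line_continuous σ hσ).aestronglyMeasurable) ?_
  exact Filter.Eventually.of_forall hbd

lemma exp_eq_integral {σ u : ℝ} (hσ : 0 < σ) (hu : 0 < u) :
    (Real.exp (-u) : ℂ) =
      (1 / (2 * Real.pi)) •
        ∫ y : ℝ, (u : ℂ) ^ (-((σ : ℂ) + y * I)) * Complex.Gamma (σ + y * I) := by
  set f : ℝ → ℂ := fun x => (Real.exp (-x) : ℂ) with hf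
  have hmel : ∀ s : ℂ, 0 < s.re → mellin f s = Complex.Gamma s := fun s hs => by
    rw [Complex.Gamma_eq_integral hs, Complex.GammaIntegral_eq_mellin]
  have h1 : MellinConvergent f σ := by
    have h := Complex.GammaIntegral_convergent (s := (σ : ℂ)) (by simpa using hσ)
    refine h.congr_fun (fun x hx => ?_) measurableSet_Ioi
    simp [hf, smul_eq_mul, mul_comm]
  have h2 : VerticalIntegrable (mellin f) σ := by
    refine (Gamma_vertical_integrable hσ).congr ?_
    exact Filter.Eventually.of_forall fun y => (hmel _ (by simp [hσ])).symm
  have h3 : ContinuousAt f u := by fun_prop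
  have key := mellinInv_mellin_eq σ f hu h1 h2 h3
  rw [mellinInv] at key
  have h4 : ∀ y : ℝ, mellin f ((σ : ℂ) + y * I) = Complex.Gamma ((σ : ℂ) + y * I) :=
    fun y => hmel _ (by simp [hσ])
  simp_rw [h4, smul_eq_mul] at key
  exact key.symm

lemma pi_summable {ℓ : ℕ} (g : Fin ℓ → ℕ+ → ℝ) (h0 : ∀ j n, 0 ≤ g j n)
    (hg : ∀ j, Summable (g j)) :
    Summable fun δ : Fin ℓ → ℕ+ => ∏ j, g j (δ j) := by
  induction ℓ with
  | zero => exact Summable.of_finite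
  | succ n ih =>
    rw [← (Fin.consEquiv fun _ : Fin (n + 1) => ℕ+).summable_iff]
    have heq : (fun δ : Fin (n + 1) → ℕ+ => ∏ j, g j (δ j)) ∘
          (Fin.consEquiv fun _ : Fin (n + 1) => ℕ+) =
        fun p : ℕ+ × (Fin n → ℕ+) => g 0 p.1 * ∏ j : Fin n, g j.succ (p.2 j) := by
      funext p
      simp [Fin.consEquiv, Fin.prod_univ_succ]
    rw [heq]
    have hG : Summable fun d : Fin n → ℕ+ => ∏ j : Fin n, g j.succ (d j) :=
      ih (fun j => g j.succ) (fun j m => h0 j.succ m) fun j => hg j.succ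
    exact Summable.mul_of_nonneg (f := fun m : ℕ+ => g 0 m)
      (g := fun d : Fin n → ℕ+ => ∏ j : Fin n, g j.succ (d j)) (hg 0) hG
      (fun m => h0 0 m) (fun d => Finset.prod_nonneg fun j _ => h0 j.succ (d j))

lemma pi_tsum {ℓ : ℕ} (g : Fin ℓ → ℕ+ → ℂ) (hg : ∀ j, Summable fun n => ‖g j n‖) :
    ∑' δ : Fin ℓ → ℕ+, ∏ j, g j (δ j) = ∏ j, ∑' n, g j n := by
  induction ℓ with
  | zero =>
    rw [tsum_eq_single (default : Fin 0 → ℕ+)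
      (fun b hb => absurd (Subsingleton.elim b default) hb)]
    simp
  | succ n ih =>
    rw [← (Fin.consEquiv fun _ : Fin (n + 1) => ℕ+).tsum_eq]
    have hG : Summable fun d : Fin n → ℕ+ => ‖∏ j : Fin n, g j.succ (d j)‖ := by
      have := pi_summable (fun j m => ‖g j.succ m‖) (fun _ _ => norm_nonneg _)
        (fun j => hg j.succ)
      exact this.congr fun d => (norm_prod _ _).symm
    calc ∑' p : ℕ+ × (Fin n → ℕ+), ∏ j, g j ((Fin.consEquiv fun _ => ℕ+) p j)
        = ∑' p : ℕ+ × (Fin n → ℕ+), g 0 p.1 * ∏ j : Fin n, g j.succ (p.2 j) :=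
          tsum_congr fun p => by simp [Fin.consEquiv, Fin.prod_univ_succ]
      _ = (∑' m, g 0 m) * ∑' d : Fin n → ℕ+, ∏ j : Fin n, g j.succ (d j) :=
          (tsum_mul_tsum_of_summable_norm (hg 0) hG).symm
      _ = ∏ j, ∑' m, g j m := by
          rw [ih (fun j => g j.succ) fun j => hg j.succ, Fin.prod_univ_succ]

lemma tsum_pnat_cpow {β : ℂ} (hβ : β.re < -1) :
    ∑' n : ℕ+, ((n : ℕ) : ℂ) ^ β = riemannZeta (-β) := by
  rw [zeta_eq_tsum_one_div_nat_cpow (by simp; linarith)]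
  have hβ0 : β ≠ 0 := fun h => by simp [h] at hβ; linarith
  have h := Function.Injective.tsum_eq (g := fun n : ℕ+ => (n : ℕ))
    (f := fun n : ℕ => (n : ℂ) ^ β) (fun a b h => PNat.coe_injective h) ?_
  · rw [h]
    exact tsum_congr fun n => by rw [one_div, ← cpow_neg, neg_neg]
  · intro n hn
    rcases Nat.eq_zero_or_pos n with h0 | h0
    · exfalso; apply hn; simp [h0, Complex.zero_cpow hβ0]
    · exact ⟨⟨n, h0⟩, rfl⟩

lemma summable_pnat_rpow {p : ℝ} (hp : p < -1) :
    Summable fun n : ℕ+ => ((n : ℕ) : ℝ) ^ p := by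
  have h := Real.summable_nat_rpow.mpr hp
  exact h.comp_injective PNat.coe_injective

lemma prod_ofReal_cpow {ι : Type*} (u : Finset ι) (f : ι → ℝ) (hf : ∀ i ∈ u, 0 ≤ f i) (s : ℂ) :
    ((∏ i ∈ u, f i : ℝ) : ℂ) ^ s = ∏ i ∈ u, ((f i : ℝ) : ℂ) ^ s := by
  induction u using Finset.cons_induction with
  | empty => simp
  | cons a u ha ih =>
    rw [Finset.prod_cons, Finset.prod_cons, Complex.ofReal_mul,
      mul_cpow_ofReal_nonneg (hf a (Finset.mem_cons_self a u))
        (Finset.prod_nonneg fun i hi => hf i (Finset.mem_cons_of_mem hi)),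
      ih fun i hi => hf i (Finset.mem_cons_of_mem hi)]

/-- `Z_{α₁,…,α_ℓ}^{[ℓ]}(t)` with complex parameters. -/
noncomputable def Zc (ℓ : ℕ) (α : Fin ℓ → ℂ) (t : ℝ) : ℂ :=
  ∑' δ : Fin ℓ → ℕ+,
    (∏ j, ((δ j : ℕ) : ℂ) ^ (α j - 1)) *
      Complex.exp (-(∏ j, ((δ j : ℕ) : ℂ)) * t)

/-- The Mellin integral representation of `Z` along the vertical line `Re w = σ`:
`∫_{σ-i∞}^{σ+i∞} f(w) dw = i ∫_ℝ f(σ+iy) dy`, so after dividing by `2πi` we get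
`(1/2π) ∫_ℝ f(σ+iy) dy`. -/
theorem Zc_mellin_rep (ℓ : ℕ) (α : Fin ℓ → ℂ) (t σ : ℝ) (ht : 0 < t)
    (hσ : ∀ j, (α j).re < σ) (hσ0 : 0 < σ) :
    Zc ℓ α t =
      (1 / (2 * Real.pi)) •
        ∫ y : ℝ,
          Complex.Gamma (σ + y * Complex.I) *
            (∏ j, riemannZeta ((σ + y * Complex.I) + 1 - α j)) *
              (t : ℂ) ^ (-(σ + y * Complex.I)) := by
  have hΓcont := Gamma_line_continuous σ hσ0
  have hΓ := Gamma_vertical_integrable hσ0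
  set w : ℝ → ℂ := fun y => (σ : ℂ) + y * I with hw
  have hwre : ∀ y, (w y).re = σ := fun y => by simp [hw]
  set c : (Fin ℓ → ℕ+) → ℂ := fun δ => ∏ j, ((δ j : ℕ) : ℂ) ^ (α j - 1) with hc
  set P : (Fin ℓ → ℕ+) → ℝ := fun δ => ∏ j, ((δ j : ℕ) : ℝ) with hP
  have hPpos : ∀ δ, 0 < P δ :=
    fun δ => Finset.prod_pos fun j _ => by exact_mod_cast (δ j).pos
  have hupos : ∀ δ, 0 < P δ * t := fun δ => mul_pos (hPpos δ) ht
  set F : (Fin ℓ → ℕ+) → ℝ → ℂ :=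
    fun δ y => c δ * ((((P δ * t : ℝ)) : ℂ) ^ (-(w y)) * Complex.Gamma (w y)) with hF
  -- the norm of F
  have hnormF : ∀ δ y, ‖F δ y‖ = (‖c δ‖ * (P δ * t) ^ (-σ)) * ‖Complex.Gamma (w y)‖ := by
    intro δ y
    have h1 : ‖(((P δ * t : ℝ)) : ℂ) ^ (-(w y))‖ = (P δ * t) ^ (-σ) := by
      rw [Complex.norm_cpow_eq_rpow_re_of_pos (hupos δ)]
      congr 1
      simp [hw]
    rw [hF]
    simp only [norm_mul, h1]
    ring
  -- integrability of each F δ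
  have hFcont : ∀ δ, Continuous (F δ) := by
    intro δ
    apply continuous_const.mul
    apply Continuous.mul _ hΓcont
    refine Continuous.const_cpow (by fun_prop) (Or.inl ?_)
    exact_mod_cast (hupos δ).ne'
  have hFint : ∀ δ, Integrable (F δ) := by
    intro δ
    refine Integrable.mono' ((hΓ.norm.const_mul (‖c δ‖ * (P δ * t) ^ (-σ))))
      (hFcont δ).aestronglyMeasurable (Filter.Eventually.of_forall fun y => ?_)
    rw [hnormF δ y]
  -- the integral of the norm
  have hInorm : ∀ δ, (∫ y : ℝ, ‖F δ y‖) =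
      (∏ j, ((δ j : ℕ) : ℝ) ^ ((α j).re - 1 - σ)) * (t ^ (-σ) * ∫ y : ℝ, ‖Complex.Gamma (w y)‖) := by
    intro δ
    simp_rw [hnormF δ]
    rw [MeasureTheory.integral_const_mul]
    have hnc : ‖c δ‖ = ∏ j, ((δ j : ℕ) : ℝ) ^ ((α j).re - 1) := by
      rw [hc, norm_prod]
      refine Finset.prod_congr rfl fun j _ => ?_
      have hpos : (0:ℝ) < ((δ j : ℕ) : ℝ) := by exact_mod_cast (δ j).pos
      rw [show (((δ j : ℕ) : ℂ)) = ((((δ j : ℕ) : ℝ)) : ℂ) by push_cast; rfl,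
        Complex.norm_cpow_eq_rpow_re_of_pos hpos]
      simp
    rw [hnc, Real.mul_rpow (hPpos δ).le ht.le, hP]
    rw [← Real.finset_prod_rpow _ _ (fun j _ => by positivity) (-σ)]
    have hprod : (∏ j, ((δ j : ℕ) : ℝ) ^ ((α j).re - 1)) * (∏ j, ((δ j : ℕ) : ℝ) ^ (-σ))
        = ∏ j, ((δ j : ℕ) : ℝ) ^ ((α j).re - 1 - σ) := by
      rw [← Finset.prod_mul_distrib]
      refine Finset.prod_congr rfl fun j _ => ?_
      have hpos : (0:ℝ) < ((δ j : ℕ) : ℝ) := by exact_mod_cast (δ j).pos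
      rw [← Real.rpow_add hpos]
      ring_nf
    rw [← hprod]
    ring
  -- summability of the norm integrals
  have hsumnorm : Summable fun δ => ∫ y : ℝ, ‖F δ y‖ := by
    rw [summable_congr hInorm]
    refine Summable.mul_right _ ?_
    refine pi_summable (fun j n => ((n : ℕ) : ℝ) ^ ((α j).re - 1 - σ))
      (fun j n => Real.rpow_nonneg (by positivity) _) fun j => ?_
    exact summable_pnat_rpow (by have := hσ j; linarith)
  have hsum : Summable fun δ => ∫ y : ℝ, F δ y :=
    Summable.of_norm_bounded hsumnorm fun δ => norm_integral_le_integral_norm _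
  -- step 1: term identity
  have hterm : ∀ δ : Fin ℓ → ℕ+,
      c δ * Complex.exp (-(∏ j, ((δ j : ℕ) : ℂ)) * t) =
        (1 / (2 * Real.pi)) • ∫ y : ℝ, F δ y := by
    intro δ
    have harg : (-(∏ j, ((δ j : ℕ) : ℂ)) * t) = ((-(P δ * t) : ℝ) : ℂ) := by
      rw [hP]; push_cast; ring
    rw [harg, ← Complex.ofReal_exp, exp_eq_integral hσ0 (hupos δ), mul_smul_comm,
      ← MeasureTheory.integral_const_mul]
  -- step 2-3: sum over δ, pull out the smul and swap sum and integral
  have step : Zc ℓ α t = (1 / (2 * Real.pi)) • ∫ y : ℝ, ∑' δ : Fin ℓ → ℕ+, F δ y := by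
    rw [Zc, tsum_congr hterm, Summable.tsum_const_smul _ hsum,
      integral_tsum_of_summable_integral_norm hFint hsumnorm]
  rw [step]
  congr 1
  refine MeasureTheory.integral_congr_ae (Filter.Eventually.of_forall fun y => ?_)
  beta_reduce
  -- pointwise identity
  have hne : ∀ j : Fin ℓ, (α j - 1 - w y).re < -1 := by
    intro j
    simp only [Complex.sub_re, Complex.one_re, hwre]
    have := hσ j
    linarith
  have hterm2 : ∀ δ : Fin ℓ → ℕ+,
      F δ y = (Complex.Gamma (w y) * (t : ℂ) ^ (-(w y))) *
        ∏ j, ((δ j : ℕ) : ℂ) ^ (α j - 1 - w y) := by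
    intro δ
    simp only [hF]
    have h1 : (((P δ * t : ℝ)) : ℂ) ^ (-(w y)) =
        ((P δ : ℝ) : ℂ) ^ (-(w y)) * ((t : ℝ) : ℂ) ^ (-(w y)) := by
      rw [Complex.ofReal_mul, mul_cpow_ofReal_nonneg (hPpos δ).le ht.le]
    have h2 : ((P δ : ℝ) : ℂ) ^ (-(w y)) = ∏ j, (((δ j : ℕ) : ℝ) : ℂ) ^ (-(w y)) := by
      rw [hP, prod_ofReal_cpow _ _ (fun j _ => by positivity)]
    rw [h1, h2]
    have hcomb : (∏ j, (((δ j : ℕ) : ℝ) : ℂ) ^ (-(w y))) * (∏ j, ((δ j : ℕ) : ℂ) ^ (α j - 1))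
        = ∏ j, ((δ j : ℕ) : ℂ) ^ (α j - 1 - w y) := by
      rw [← Finset.prod_mul_distrib]
      refine Finset.prod_congr rfl fun j _ => ?_
      have hne0 : ((δ j : ℕ) : ℂ) ≠ 0 := by
        exact_mod_cast (δ j).pos.ne'
      rw [show ((((δ j : ℕ) : ℝ)) : ℂ) = ((δ j : ℕ) : ℂ) by push_cast; rfl,
        ← Complex.cpow_add _ _ hne0]
      ring_nf
    rw [← hcomb]
    ring
  rw [tsum_congr hterm2, tsum_mul_left]
  have hzeta : (∑' δ : Fin ℓ → ℕ+, ∏ j, ((δ j : ℕ) : ℂ) ^ (α j - 1 - w y)) =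
      ∏ j, riemannZeta (w y + 1 - α j) := by
    rw [pi_tsum (fun j (n : ℕ+) => ((n : ℕ) : ℂ) ^ (α j - 1 - w y)) ?_]
    · refine Finset.prod_congr rfl fun j _ => ?_
      rw [tsum_pnat_cpow (hne j)]
      congr 1
      ring
    · intro j
      have : ∀ n : ℕ+, ‖((n : ℕ) : ℂ) ^ (α j - 1 - w y)‖ = ((n : ℕ) : ℝ) ^ ((α j).re - 1 - σ) := by
        intro n
        have hpos : (0:ℝ) < ((n : ℕ) : ℝ) := by exact_mod_cast n.pos
        rw [show (((n : ℕ) : ℂ)) = ((((n : ℕ) : ℝ)) : ℂ) by push_cast; rfl,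
          Complex.norm_cpow_eq_rpow_re_of_pos hpos]
        congr 1
        simp [hwre, Complex.sub_re, Complex.one_re, hw]
      rw [summable_congr this]
      exact summable_pnat_rpow (by have := hσ j; linarith)
  rw [hzeta]
  ring
end
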